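/- (Rodrigues' formula) For every nonzero ω ∈ ℝ³ with θ := ‖ω‖, the matrix exponential of the hat matrix satisfies exp([ω]ₓ) = I + (sin θ / θ)[ω]ₓ + ((1 − cos θ)/θ²)[ω]ₓ². -/

import Mathlib

/-!
Since `[ω]ₓ³ = -θ² [ω]ₓ` with `θ = ‖ω‖`, the odd powers of `[ω]ₓ` are scalar multiples of
`[ω]ₓ` and the even powers beyond the zeroth are scalar multiples of `[ω]ₓ²`. Splitting the
exponential series into these two parts leaves exactly the Taylor series of `sin θ / θ` and
`(1 - cos θ) / θ²`.
-/
open Matrix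

/-- The hat map sending `ω ∈ ℝ³` to the skew-symmetric matrix `[ω]ₓ` with
`[ω]ₓ h = ω × h`. -/
def hat (ω : EuclideanSpace ℝ (Fin 3)) : Matrix (Fin 3) (Fin 3) ℝ :=
  !![0, -ω 2, ω 1; ω 2, 0, -ω 0; -ω 1, ω 0, 0]

open Nat

section PowThree

variable {R 𝔸 : Type*} [CommSemiring R] [Semiring 𝔸] [Algebra R 𝔸] {A : 𝔸} {c : R}

theorem pow_two_mul_add_one_of_pow_three_eq_smul (h : A ^ 3 = c • A) (k : ℕ) :
    A ^ (2 * k + 1) = c ^ k • A := by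
  induction k with
  | zero => simp
  | succ k ih =>
    rw [show 2 * (k + 1) + 1 = 2 + (2 * k + 1) by ring, pow_add, ih, mul_smul_comm,
      ← pow_succ, h, smul_smul, pow_succ]

theorem pow_two_mul_add_two_of_pow_three_eq_smul (h : A ^ 3 = c • A) (k : ℕ) :
    A ^ (2 * k + 2) = c ^ k • A ^ 2 := by
  rw [pow_succ, pow_two_mul_add_one_of_pow_three_eq_smul h, smul_mul_assoc, ← sq]

end PowThree

theorem Real.hasSum_sin_div (θ : ℝ) (hθ : θ ≠ 0) :
    HasSum (fun k : ℕ => (-θ ^ 2) ^ k / (2 * k + 1)!) (Real.sin θ / θ) :=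
  ((Real.hasSum_sin θ).div_const θ).congr_fun fun k => by
    rw [neg_pow, ← pow_mul, pow_succ]
    field_simp

theorem Real.hasSum_one_sub_cos_div_sq (θ : ℝ) (hθ : θ ≠ 0) :
    HasSum (fun k : ℕ => (-θ ^ 2) ^ k / (2 * k + 2)!) ((1 - Real.cos θ) / θ ^ 2) := by
  have hcos : HasSum (fun k : ℕ => (-1) ^ (k + 1) * θ ^ (2 * (k + 1)) / (2 * (k + 1))!)
      (Real.cos θ - 1) := by
    simpa using (hasSum_nat_add_iff' 1).mpr (Real.hasSum_cos θ)
  rw [← neg_sub]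
  refine (hcos.neg.div_const _).congr_fun fun k => ?_
  rw [neg_pow, ← pow_mul, Nat.mul_add_one 2 k, pow_succ (-1 : ℝ), pow_add]
  field_simp

theorem NormedSpace.exp_eq_of_pow_three_eq_neg_sq_smul {𝔸 : Type*} [Ring 𝔸] [Algebra ℝ 𝔸]
    [TopologicalSpace 𝔸] [IsTopologicalRing 𝔸] [ContinuousSMul ℝ 𝔸] [T2Space 𝔸]
    {A : 𝔸} {θ : ℝ} (hθ : θ ≠ 0) (h : A ^ 3 = (-θ ^ 2) • A) :
    NormedSpace.exp A = 1 + (Real.sin θ / θ) • A + ((1 - Real.cos θ) / θ ^ 2) • A ^ 2 := by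
  have hodd : HasSum (fun k => ((2 * k + 1)! : ℝ)⁻¹ • A ^ (2 * k + 1))
      ((Real.sin θ / θ) • A) :=
    ((Real.hasSum_sin_div θ hθ).smul_const A).congr_fun fun k => by
      rw [pow_two_mul_add_one_of_pow_three_eq_smul h, smul_smul, inv_mul_eq_div]
  have heven : HasSum (fun k => ((2 * k + 2)! : ℝ)⁻¹ • A ^ (2 * k + 2))
      (((1 - Real.cos θ) / θ ^ 2) • A ^ 2) :=
    ((Real.hasSum_one_sub_cos_div_sq θ hθ).smul_const (A ^ 2)).congr_fun fun k => by
      rw [pow_two_mul_add_two_of_pow_three_eq_smul h, smul_smul, inv_mul_eq_div]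
  have hexp := (hasSum_nat_add_iff (f := fun n => (n ! : ℝ)⁻¹ • A ^ n) 1).mp
    (hodd.even_add_odd heven)
  rw [congrFun (NormedSpace.exp_eq_tsum ℝ) A, hexp.tsum_eq, Finset.sum_range_one,
    factorial_zero, cast_one, inv_one, pow_zero, one_smul, add_comm, add_assoc]

theorem hat_pow_three (ω : EuclideanSpace ℝ (Fin 3)) : hat ω ^ 3 = (-‖ω‖ ^ 2) • hat ω := by
  rw [EuclideanSpace.norm_sq_eq, Fin.sum_univ_three]
  ext i j
  fin_cases i <;> fin_cases j <;> simp [hat, pow_succ, mul_apply, Fin.sum_univ_three] <;> ring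

/-- **Rodrigues' formula**: for nonzero `ω ∈ ℝ³` with `θ := ‖ω‖`,
`exp([ω]ₓ) = I + (sin θ / θ)[ω]ₓ + ((1 − cos θ)/θ²)[ω]ₓ²`. -/
theorem rodrigues_formula (ω : EuclideanSpace ℝ (Fin 3)) (hω : ω ≠ 0) :
    NormedSpace.exp (hat ω) =
      (1 : Matrix (Fin 3) (Fin 3) ℝ) + (Real.sin ‖ω‖ / ‖ω‖) • hat ω +
        ((1 - Real.cos ‖ω‖) / ‖ω‖ ^ 2) • (hat ω * hat ω) := by
  rw [NormedSpace.exp_eq_of_pow_three_eq_neg_sq_smul (norm_ne_zero_iff.mpr hω) (hat_pow_three ω),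
    sq (hat ω)]
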